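/- arXiv:math-ph/9909011 — 4 statements merged into one kernel-verified Lean document; each statement's English description precedes it below -/
import Mathlib

section
/- Suppose B : ℝ² → ℝ satisfies |B(x)| ≤ C|x|^{−2−δ} for |x| large (some C, δ > 0) and B ∈ L¹_{loc}∩L^{1+ε}_{loc} for some ε > 0. Let F := (1/2π)∫_{ℝ²} B. Then for every ε' > 0 there exists R > 0 such that |φ(x) − F ln|x|| < ε' ln|x| for all |x| > R, where φ(x) = (1/2π)∫ B(y) ln|x−y| dy. -/
/-!
Write `φ(x) - F log|x| = (1/2π) ∫ B(y) (log|x-y| - log|x|) dy`. Where `|y| ≤ |x|/2` the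
bracket is at most `log 2`, so that part is `O(1)`. Where `|y| > |x|/2` the bracket is at most
`log|x| + |log|x-y||`: the first term contributes `log|x|` times the tail `∫_{|y|>|x|/2} |B|`,
which tends to `0`; for the second, the decay of `B` bounds `|B(y)| |log|x-y||` by a translate
of the locally integrable kernel `|log|z||` on the unit ball plus the integrable power
`|y|^(-(2+δ/2))`, so it contributes `O(1)` uniformly in `x`.
Hence `φ(x) - F log|x| = o(log|x|)`.
-/

open MeasureTheory Real Metric Set Filter Asymptotics Bornology
open scoped Topology

lemma neg_log_le_rpow_neg_div {s a : ℝ} (hs : 0 ≤ s) (ha : 0 < a) :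
    -log s ≤ s ^ (-a) / a := by
  have h := log_le_rpow_div (inv_nonneg.mpr hs) ha
  rwa [log_inv, inv_rpow hs, ← rpow_neg hs] at h

lemma abs_log_sub_log_le_log_two {s t : ℝ} (ht : 0 < t) (hs₁ : t / 2 ≤ s)
    (hs₂ : s ≤ 2 * t) :
    |log s - log t| ≤ log 2 := by
  have hs : 0 < s := by linarith
  rw [← log_div hs.ne' ht.ne', abs_le, neg_le, ← log_inv, inv_div]
  exact ⟨log_le_log (by positivity) ((div_le_iff₀ hs).mpr (by linarith)),
    log_le_log (by positivity) ((div_le_iff₀ ht).mpr hs₂)⟩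

lemma MeasureTheory.Integrable.tendsto_setIntegral_compl_closedBall {X F : Type*}
    [PseudoMetricSpace X] [MeasurableSpace X] [OpensMeasurableSpace X]
    [NormedAddCommGroup F] [NormedSpace ℝ F]
    {ν : Measure X} {f : X → F} (hf : Integrable f ν) (x : X) :
    Tendsto (fun r => ∫ y in (closedBall x r)ᶜ, f y ∂ν) atTop (𝓝 0) := by
  have hanti : Antitone fun r : ℝ => (closedBall x r)ᶜ := fun r r' h =>
    compl_subset_compl.mpr (closedBall_subset_closedBall h)
  have hempty : ⋂ r : ℝ, (closedBall x r)ᶜ = ∅ :=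
    iInter_eq_empty_iff.mpr fun y => ⟨dist y x, by simp⟩
  simpa [hempty] using tendsto_setIntegral_of_antitone (fun _ => measurableSet_closedBall.compl)
    hanti ⟨0, hf.integrableOn⟩

section

variable {E : Type*} [NormedAddCommGroup E]

lemma abs_mul_abs_log_norm_sub_le {x y : E} {b C p a : ℝ} (hC : 0 ≤ C) (hp : 0 ≤ p)
    (ha : 0 < a) (hb : |b| ≤ C * ‖y‖ ^ (-p)) (hy : 1 ≤ ‖y‖) (hxy : ‖x‖ ≤ 2 * ‖y‖) :
    |b| * |log ‖x - y‖| ≤ C * (ball 0 1).indicator (fun z => |log ‖z‖|) (x - y)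
      + C * 3 ^ a / a * (ball 0 1)ᶜ.indicator (fun z => ‖z‖ ^ (a - p)) y := by
  have hy0 : 0 < ‖y‖ := by linarith
  rw [indicator_of_mem (by simpa using hy : y ∈ (ball (0 : E) 1)ᶜ)]
  by_cases hnear : x - y ∈ ball (0 : E) 1
  · rw [indicator_of_mem hnear]
    have hb1 : |b| ≤ C :=
      hb.trans (mul_le_of_le_one_right hC
        (rpow_le_one_of_one_le_of_nonpos hy (neg_nonpos.mpr hp)))
    calc |b| * |log ‖x - y‖| ≤ C * |log ‖x - y‖| :=
          mul_le_mul_of_nonneg_right hb1 (abs_nonneg _)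
      _ ≤ _ := le_add_of_nonneg_right (by positivity)
  · rw [indicator_of_notMem hnear, mul_zero, zero_add]
    have hfar : 1 ≤ ‖x - y‖ := by simpa using hnear
    have hlog : |log ‖x - y‖| ≤ 3 ^ a * ‖y‖ ^ a / a := by
      rw [abs_of_nonneg (log_nonneg hfar)]
      calc log ‖x - y‖ ≤ log (3 * ‖y‖) :=
            log_le_log (by linarith) (by linarith [norm_sub_le x y])
        _ ≤ (3 * ‖y‖) ^ a / a := log_le_rpow_div (by positivity) ha
        _ = 3 ^ a * ‖y‖ ^ a / a := by rw [mul_rpow (by norm_num) hy0.le]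
    calc |b| * |log ‖x - y‖| ≤ C * ‖y‖ ^ (-p) * (3 ^ a * ‖y‖ ^ a / a) :=
          mul_le_mul hb hlog (abs_nonneg _) (by positivity)
      _ = C * 3 ^ a / a * ‖y‖ ^ (a - p) := by rw [sub_eq_add_neg, rpow_add hy0]; ring

lemma abs_mul_log_norm_sub_sub_log_norm_le {B : E → ℝ} {C R₀ p a : ℝ} (hC : 0 ≤ C)
    (hp : 0 ≤ p) (ha : 0 < a) (hdecay : ∀ y, R₀ ≤ ‖y‖ → |B y| ≤ C * ‖y‖ ^ (-p)) {x : E}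
    (hx : 2 * max R₀ 1 ≤ ‖x‖) (y : E) :
    |B y * (log ‖x - y‖ - log ‖x‖)| ≤
      log 2 * |B y| + log ‖x‖ * (closedBall 0 (‖x‖ / 2))ᶜ.indicator (fun z => |B z|) y
        + (C * (ball 0 1).indicator (fun z => |log ‖z‖|) (x - y)
          + C * 3 ^ a / a * (ball 0 1)ᶜ.indicator (fun z => ‖z‖ ^ (a - p)) y) := by
  have hR₀ : R₀ ≤ ‖x‖ / 2 := by linarith [le_max_left R₀ 1]
  have h1 : 1 ≤ ‖x‖ / 2 := by linarith [le_max_right R₀ 1]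
  have hlog : 0 ≤ log ‖x‖ := log_nonneg (by linarith)
  have hnear : 0 ≤ C * (ball 0 1).indicator (fun z => |log ‖z‖|) (x - y) :=
    mul_nonneg hC (indicator_nonneg (fun _ _ => abs_nonneg _) _)
  have hfar : 0 ≤ C * 3 ^ a / a * (ball 0 1)ᶜ.indicator (fun z => ‖z‖ ^ (a - p)) y :=
    mul_nonneg (by positivity) (indicator_nonneg (fun _ _ => rpow_nonneg (norm_nonneg _) _) _)
  have hB2 : 0 ≤ log 2 * |B y| := mul_nonneg (log_nonneg one_le_two) (abs_nonneg _)
  rw [abs_mul]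
  by_cases hy : y ∈ closedBall (0 : E) (‖x‖ / 2)
  · rw [indicator_of_notMem (notMem_compl_iff.mpr hy), mul_zero, add_zero]
    have hy' : ‖y‖ ≤ ‖x‖ / 2 := mem_closedBall_zero_iff.mp hy
    have hD : |log ‖x - y‖ - log ‖x‖| ≤ log 2 :=
      abs_log_sub_log_le_log_two (by linarith) (by linarith [norm_sub_norm_le x y])
        (by linarith [norm_sub_le x y])
    nlinarith [mul_le_mul_of_nonneg_left hD (abs_nonneg (B y))]
  · rw [indicator_of_mem hy]
    have hy' : ‖x‖ / 2 < ‖y‖ := by simpa using hy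
    have hD : |log ‖x - y‖ - log ‖x‖| ≤ |log ‖x - y‖| + log ‖x‖ := by
      simpa [abs_of_nonneg hlog] using abs_sub (log ‖x - y‖) (log ‖x‖)
    have hsing := abs_mul_abs_log_norm_sub_le hC hp ha (hdecay y (by linarith)) (by linarith)
      (by linarith : ‖x‖ ≤ 2 * ‖y‖)
    nlinarith [mul_le_mul_of_nonneg_left hD (abs_nonneg (B y))]

variable [NormedSpace ℝ E] [FiniteDimensional ℝ E] [MeasurableSpace E] [BorelSpace E]
  {μ : Measure E} [μ.IsAddHaarMeasure]

lemma integrableOn_log_norm_ball [Nontrivial E] :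
    IntegrableOn (fun z : E => log ‖z‖) (ball 0 1) μ := by
  have hd : 1 ≤ Module.finrank ℝ E := Module.finrank_pos
  refine integrableOn_ball_of_norm_le_rpow (C := 2) (α := 1 / 2) hd ?_ ?_
    (measurable_log.comp measurable_norm).aestronglyMeasurable
  · have : (1 : ℝ) ≤ Module.finrank ℝ E := by exact_mod_cast hd
    linarith
  · refine (ae_restrict_iff' measurableSet_ball).mpr (.of_forall fun z hz => ?_)
    rw [norm_eq_abs, abs_of_nonpos (log_nonpos (norm_nonneg z) (mem_ball_zero_iff.mp hz).le)]
    calc -log ‖z‖ ≤ ‖z‖ ^ (-(1 / 2 : ℝ)) / (1 / 2) :=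
          neg_log_le_rpow_neg_div (norm_nonneg z) one_half_pos
      _ = 2 * ‖z‖ ^ (-(1 / 2 : ℝ)) := by ring

lemma integrableOn_compl_ball_norm_rpow_neg {p : ℝ} (hp : (Module.finrank ℝ E : ℝ) < p) :
    IntegrableOn (fun y : E => ‖y‖ ^ (-p)) (ball 0 1)ᶜ μ := by
  refine ((integrable_one_add_norm hp).const_mul (2 ^ p)).integrableOn.mono'
    (measurable_norm.pow_const _).aestronglyMeasurable ?_
  refine (ae_restrict_iff' measurableSet_ball.compl).mpr (.of_forall fun y hy => ?_)
  have hy : 1 ≤ ‖y‖ := by simpa using hy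
  have hp : 0 ≤ p := (Nat.cast_nonneg _).trans hp.le
  rw [norm_eq_abs, abs_of_nonneg (by positivity)]
  calc ‖y‖ ^ (-p) = 2 ^ p * (2 * ‖y‖) ^ (-p) := by
        rw [mul_rpow zero_le_two (norm_nonneg y), ← mul_assoc, ← rpow_add two_pos,
          add_neg_cancel, rpow_zero, one_mul]
    _ ≤ 2 ^ p * (1 + ‖y‖) ^ (-p) :=
        mul_le_mul_of_nonneg_left (rpow_le_rpow_of_nonpos (by positivity) (by linarith)
          (neg_nonpos.mpr hp)) (by positivity)

theorem MeasureTheory.LocallyIntegrable.integrable_of_norm_le_rpow_neg {F : Type*}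
    [NormedAddCommGroup F] {f : E → F} {C R p : ℝ} (hf : LocallyIntegrable f μ)
    (hp : (Module.finrank ℝ E : ℝ) < p)
    (hdecay : ∀ x, R ≤ ‖x‖ → ‖f x‖ ≤ C * ‖x‖ ^ (-p)) : Integrable f μ := by
  set ρ := max R 1
  have hmaj : IntegrableOn (fun x => C * ‖x‖ ^ (-p)) (closedBall 0 ρ)ᶜ μ :=
    IntegrableOn.mono_set ((integrableOn_compl_ball_norm_rpow_neg hp).const_mul C) <|
      compl_subset_compl.mpr
        (ball_subset_closedBall.trans (closedBall_subset_closedBall (le_max_right _ _)))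
  have hfar : IntegrableOn f (closedBall 0 ρ)ᶜ μ := by
    refine hmaj.mono' hf.aestronglyMeasurable.restrict
      ((ae_restrict_iff' measurableSet_closedBall.compl).mpr
        (.of_forall fun x hx => hdecay x ?_))
    have : ρ < ‖x‖ := by simpa using hx
    linarith [le_max_left R 1]
  simpa using (hf.integrableOn_isCompact (isCompact_closedBall 0 ρ)).union hfar

lemma abs_integral_mul_log_norm_sub_sub_le {B : E → ℝ} {C R₀ p a : ℝ} (hB : Integrable B μ)
    (hC : 0 ≤ C) (hp : 0 ≤ p) (ha : 0 < a) (hdecay : ∀ y, R₀ ≤ ‖y‖ → |B y| ≤ C * ‖y‖ ^ (-p))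
    (hk : IntegrableOn (fun z : E => |log ‖z‖|) (ball 0 1) μ)
    (hg : IntegrableOn (fun z : E => ‖z‖ ^ (a - p)) (ball 0 1)ᶜ μ)
    {x : E} (hx : 2 * max R₀ 1 ≤ ‖x‖) :
    |∫ y, B y * log ‖x - y‖ ∂μ - (∫ y, B y ∂μ) * log ‖x‖| ≤
      log 2 * ∫ y, |B y| ∂μ + log ‖x‖ * ∫ y in (closedBall 0 (‖x‖ / 2))ᶜ, |B y| ∂μ
        + (C * ∫ z in ball 0 1, |log ‖z‖| ∂μ
          + C * 3 ^ a / a * ∫ z in (ball 0 1)ᶜ, ‖z‖ ^ (a - p) ∂μ) := by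
  have hk' := (integrable_indicator_iff measurableSet_ball).mpr hk
  have hg' := (integrable_indicator_iff measurableSet_ball.compl).mpr hg
  have htail := (integrable_indicator_iff measurableSet_closedBall.compl).mpr
    (hB.abs.integrableOn (s := (closedBall 0 (‖x‖ / 2))ᶜ))
  have hnear :
      Integrable (fun y => C * (ball 0 1).indicator (fun z => |log ‖z‖|) (x - y)) μ :=
    (hk'.comp_sub_left x).const_mul C
  have hI₁ : Integrable (fun y => log 2 * |B y|
      + log ‖x‖ * (closedBall 0 (‖x‖ / 2))ᶜ.indicator (fun z => |B z|) y) μ :=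
    (hB.abs.const_mul _).add (htail.const_mul _)
  have hI₂ : Integrable (fun y => C * (ball 0 1).indicator (fun z => |log ‖z‖|) (x - y)
      + C * 3 ^ a / a * (ball 0 1)ᶜ.indicator (fun z => ‖z‖ ^ (a - p)) y) μ :=
    hnear.add (hg'.const_mul _)
  have hbound := abs_mul_log_norm_sub_sub_log_norm_le hC hp ha hdecay hx
  have hint : Integrable (fun y => B y * (log ‖x - y‖ - log ‖x‖)) μ := by
    refine (hI₁.add hI₂).mono' (hB.aestronglyMeasurable.mul ?_)
      (.of_forall fun y => (norm_eq_abs _).trans_le (hbound y))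
    exact ((measurable_log.comp (measurable_const.sub measurable_id).norm).sub
      measurable_const).aestronglyMeasurable
  have hBlog : Integrable (fun y => B y * log ‖x - y‖) μ :=
    (hint.add (hB.mul_const (log ‖x‖))).congr
      (.of_forall fun y => by simp only [Pi.add_apply]; ring)
  rw [← integral_mul_const, ← integral_sub hBlog (hB.mul_const _)]
  simp_rw [← mul_sub]
  calc |∫ y, B y * (log ‖x - y‖ - log ‖x‖) ∂μ|
        ≤ ∫ y, |B y * (log ‖x - y‖ - log ‖x‖)| ∂μ := abs_integral_le_integral_abs
    _ ≤ _ := integral_mono hint.abs (hI₁.add hI₂) hbound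
    _ = _ := by
        simp only [Pi.add_apply]
        rw [integral_add hI₁ hI₂, integral_add (hB.abs.const_mul _) (htail.const_mul _),
          integral_add hnear (hg'.const_mul _), integral_const_mul, integral_const_mul,
          integral_const_mul, integral_const_mul, integral_sub_left_eq_self,
          integral_indicator measurableSet_ball, integral_indicator measurableSet_ball.compl,
          integral_indicator measurableSet_closedBall.compl]

theorem isLittleO_integral_mul_log_norm_sub [Nontrivial E] {B : E → ℝ} {C R₀ p : ℝ}
    (hB : Integrable B μ) (hC : 0 ≤ C) (hp : (Module.finrank ℝ E : ℝ) < p)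
    (hdecay : ∀ y, R₀ ≤ ‖y‖ → |B y| ≤ C * ‖y‖ ^ (-p)) :
    (fun x => ∫ y, B y * log ‖x - y‖ ∂μ - (∫ y, B y ∂μ) * log ‖x‖) =o[cobounded E]
      fun x => log ‖x‖ := by
  -- half of the excess decay `p - finrank` absorbs the growth of `log ‖x - y‖` in `y`
  set a := (p - Module.finrank ℝ E) / 2 with ha_def
  have ha : 0 < a := half_pos (sub_pos.mpr hp)
  have hg : IntegrableOn (fun z : E => ‖z‖ ^ (a - p)) (ball 0 1)ᶜ μ := by
    simpa using
      integrableOn_compl_ball_norm_rpow_neg (μ := μ) (p := p - a) (by linarith [ha_def])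
  set A := log 2 * ∫ y, |B y| ∂μ + (C * ∫ z in ball 0 1, |log ‖z‖| ∂μ
    + C * 3 ^ a / a * ∫ z in (ball 0 1)ᶜ, ‖z‖ ^ (a - p) ∂μ)
  set τ : ℝ → ℝ := fun r => ∫ y in (closedBall 0 r)ᶜ, |B y| ∂μ
  have hlog : Tendsto (fun x : E => log ‖x‖) (cobounded E) atTop :=
    tendsto_log_atTop.comp tendsto_norm_cobounded_atTop
  have hτ : Tendsto (fun x : E => τ (‖x‖ / 2)) (cobounded E) (𝓝 0) :=
    (hB.abs.tendsto_setIntegral_compl_closedBall 0).comp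
      (tendsto_norm_cobounded_atTop.atTop_div_const two_pos)
  have hmajorant :
      (fun x : E => A + τ (‖x‖ / 2) * log ‖x‖) =o[cobounded E] fun x => log ‖x‖ := by
    refine (isLittleO_const_left.mpr (.inr (tendsto_norm_atTop_atTop.comp hlog))).add ?_
    simpa using
      ((isLittleO_one_iff ℝ).mpr hτ).mul_isBigO (isBigO_refl (fun x : E => log ‖x‖) _)
  refine (IsBigO.of_bound 1 ?_).trans_isLittleO hmajorant
  filter_upwards [hasBasis_cobounded_norm.mem_of_mem (i := 2 * max R₀ 1) trivial] with x hx
  rw [norm_eq_abs, norm_eq_abs, one_mul]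
  refine (abs_integral_mul_log_norm_sub_sub_le hB hC ((Nat.cast_nonneg _).trans hp.le) ha
    hdecay integrableOn_log_norm_ball.abs hg hx).trans (le_of_eq_of_le ?_ (le_abs_self _))
  ring

end

theorem log_potential_asymptotics_general
    (B : EuclideanSpace ℝ (Fin 2) → ℝ) (δ C R₀ : ℝ)
    (hδ : 0 < δ) (hC : 0 < C)
    (hdecay : ∀ x, R₀ ≤ ‖x‖ → |B x| ≤ C * ‖x‖ ^ (-(2 + δ)))
    (hloc1 : LocallyIntegrable B volume) :
    ∀ ε' > 0, ∃ R > 0, ∀ x : EuclideanSpace ℝ (Fin 2), R < ‖x‖ →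
      |(1 / (2 * π)) * (∫ y, B y * Real.log ‖x - y‖)
          - ((1 / (2 * π)) * ∫ y, B y) * Real.log ‖x‖|
        < ε' * Real.log ‖x‖ := by
  intro ε' hε'
  have hdim : (Module.finrank ℝ (EuclideanSpace ℝ (Fin 2)) : ℝ) < 2 + δ := by
    rw [finrank_euclideanSpace_fin]; push_cast; linarith
  have hB := hloc1.integrable_of_norm_le_rpow_neg hdim fun x hx =>
    (norm_eq_abs _).trans_le (hdecay x hx)
  have hsmall := (isLittleO_integral_mul_log_norm_sub hB hC.le hdim hdecay).def
    (mul_pos pi_pos hε')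
  have hpos : ∀ᶠ x : EuclideanSpace ℝ (Fin 2) in cobounded _, 0 < log ‖x‖ :=
    (tendsto_log_atTop.comp tendsto_norm_cobounded_atTop).eventually_gt_atTop 0
  obtain ⟨r, -, hr⟩ := (hasBasis_cobounded_compl_closedBall 0).mem_iff.mp (hsmall.and hpos)
  refine ⟨max r 1, by positivity, fun x hx => ?_⟩
  obtain ⟨hx_small, hx_pos⟩ := hr (by simpa using (le_max_left r 1).trans_lt hx)
  rw [norm_eq_abs, norm_eq_abs, abs_of_pos hx_pos] at hx_small
  rw [mul_assoc, ← mul_sub, abs_mul, abs_of_pos (by positivity)]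
  calc 1 / (2 * π) * |(∫ y, B y * log ‖x - y‖) - (∫ y, B y) * log ‖x‖|
      ≤ 1 / (2 * π) * (π * ε' * log ‖x‖) := by gcongr
    _ = ε' * log ‖x‖ / 2 := by field_simp
    _ < ε' * log ‖x‖ := half_lt_self (mul_pos hε' hx_pos)

/-- For a field with powerlike decay of order `2+δ` and local `L^{1+ε}` regularity,
the logarithmic potential `φ` satisfies `|φ(x) − F log|x|| < ε' log|x|` for large `|x|`. -/
theorem log_potential_asymptotics
    (B : EuclideanSpace ℝ (Fin 2) → ℝ) (δ ε C R₀ : ℝ)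
    (hδ : 0 < δ) (hε : 0 < ε) (hC : 0 < C) (hR₀ : 0 < R₀)
    (hmeas : Measurable B)
    (hdecay : ∀ x, R₀ ≤ ‖x‖ → |B x| ≤ C * ‖x‖ ^ (-(2 + δ)))
    (hloc1 : LocallyIntegrable B volume)
    (hlocε : ∀ K : Set (EuclideanSpace ℝ (Fin 2)), IsCompact K →
      MemLp B (ENNReal.ofReal (1 + ε)) (volume.restrict K)) :
    ∀ ε' > 0, ∃ R > 0, ∀ x : EuclideanSpace ℝ (Fin 2), R < ‖x‖ →
      |(1 / (2 * π)) * (∫ y, B y * Real.log ‖x - y‖)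
          - ((1 / (2 * π)) * ∫ y, B y) * Real.log ‖x‖|
        < ε' * Real.log ‖x‖ :=
  log_potential_asymptotics_general B δ C R₀ hδ hC hdecay hloc1
end

section
/- Let B : ℝ² → ℝ satisfy |B(x)| ≤ C|x|^{−2−δ} at infinity, B ∈ L¹(ℝ²), and ∫_{ℝ²} B = 0. Define A_i(x) = (1/2π)∫_{ℝ²} B(x−z) z_i/|z|² dz. Then there exist μ > 0 and C' > 0 such that |A_i(x)| ≤ C'|x|^{−1−μ} for all sufficiently large |x|, i = 1,2. -/
/-
Zero flux lets one replace the kernel `K(x - u)` by `K(x - u) - K(x)`. As `z ↦ z / ‖z‖²` is the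
inversion in the unit circle, `|K(x - u) - K(x)| ≤ ‖u‖ / (‖x - u‖ ‖x‖)`, which is at most
`2 ‖u‖ / ‖x‖²` on `‖u‖ ≤ ‖x‖ / 2`. Splitting that disc at `‖u‖ = √‖x‖` bounds its contribution by
`‖x‖^(-3/2) ‖B‖₁` plus `‖x‖⁻¹` times the tail `∫_{‖u‖ > √‖x‖} |B| = O(‖x‖^(-δ/2))`. On
`‖u‖ > ‖x‖ / 2` one has `B = O(‖x‖^(-2-δ))`, and the singularity of `K` at `u = x` costs only
`∫_{‖x - u‖ < ρ} ‖x - u‖⁻¹ = 2πρ`. Hence the exponent `μ = min δ 1 / 2`.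
-/

open MeasureTheory Real Metric Set
open scoped ENNReal

section GradLogKernel

variable {ι : Type*} [Fintype ι]

noncomputable def gradLogKernel (i : ι) (z : EuclideanSpace ℝ ι) : ℝ := z i / ‖z‖ ^ 2

theorem measurable_gradLogKernel (i : ι) : Measurable (gradLogKernel i) := by
  unfold gradLogKernel; fun_prop

theorem abs_gradLogKernel_le (i : ι) (z : EuclideanSpace ℝ ι) : |gradLogKernel i z| ≤ ‖z‖⁻¹ := by
  rcases eq_or_ne z 0 with rfl | hz
  · simp [gradLogKernel]
  rw [gradLogKernel, abs_div, abs_of_nonneg (by positivity : (0 : ℝ) ≤ ‖z‖ ^ 2),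
    div_le_iff₀ (by positivity)]
  calc |z i| ≤ ‖z‖ := PiLp.norm_apply_le z i
    _ = ‖z‖⁻¹ * ‖z‖ ^ 2 := by field_simp

theorem abs_gradLogKernel_sub_le (i : ι) {a b : EuclideanSpace ℝ ι} (ha : a ≠ 0) (hb : b ≠ 0) :
    |gradLogKernel i a - gradLogKernel i b| ≤ ‖a - b‖ / (‖a‖ * ‖b‖) := by
  have h := dist_div_norm_sq_smul ha hb 1
  rw [dist_eq_norm, dist_eq_norm, one_pow, one_div_mul_eq_div] at h
  calc |gradLogKernel i a - gradLogKernel i b|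
      = ‖((1 / ‖a‖) ^ 2 • a - (1 / ‖b‖) ^ 2 • b) i‖ := by
        simp [gradLogKernel, div_eq_inv_mul]
    _ ≤ _ := h ▸ PiLp.norm_apply_le _ i

theorem abs_gradLogKernel_sub_le_of_norm_le (i : ι) {x u : EuclideanSpace ℝ ι} (hx : x ≠ 0)
    (hu : ‖u‖ ≤ ‖x‖ / 2) :
    |gradLogKernel i (x - u) - gradLogKernel i x| ≤ 2 / ‖x‖ ^ 2 * ‖u‖ := by
  have hx0 : 0 < ‖x‖ := norm_pos_iff.2 hx
  have hxu : ‖x‖ / 2 ≤ ‖x - u‖ := by linarith [norm_sub_norm_le x u]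
  have hxu0 : 0 < ‖x - u‖ := by linarith
  refine (abs_gradLogKernel_sub_le i (norm_pos_iff.1 hxu0) hx).trans ?_
  rw [sub_sub_cancel_left, norm_neg, div_le_iff₀ (by positivity)]
  calc ‖u‖ = 2 / ‖x‖ ^ 2 * ‖u‖ * (‖x‖ / 2 * ‖x‖) := by field_simp
    _ ≤ 2 / ‖x‖ ^ 2 * ‖u‖ * (‖x - u‖ * ‖x‖) := by gcongr

theorem abs_gradLogKernel_sub_le_indicator (i : ι) {x : EuclideanSpace ℝ ι} (hx : x ≠ 0)
    (u : EuclideanSpace ℝ ι) :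
    |gradLogKernel i (x - u) - gradLogKernel i x|
      ≤ (ball x (‖x‖ / 2)).indicator (fun u => ‖x - u‖⁻¹) u + 3 / ‖x‖ := by
  have hx0 : 0 < ‖x‖ := norm_pos_iff.2 hx
  have h := (abs_sub _ _).trans
    (add_le_add (abs_gradLogKernel_le i (x - u)) (abs_gradLogKernel_le i x))
  by_cases hu : u ∈ ball x (‖x‖ / 2)
  · rw [indicator_of_mem hu]
    linarith [show ‖x‖⁻¹ ≤ 3 / ‖x‖ by rw [inv_eq_one_div]; gcongr; norm_num]
  · rw [indicator_of_notMem hu, zero_add]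
    rw [mem_ball, dist_comm, dist_eq_norm, not_lt] at hu
    have : ‖x - u‖⁻¹ ≤ 2 / ‖x‖ := by
      rw [inv_eq_one_div, div_le_div_iff₀ (by linarith) hx0]; linarith
    linarith [show ‖x‖⁻¹ = 1 / ‖x‖ from inv_eq_one_div _,
      show 3 / ‖x‖ = 2 / ‖x‖ + 1 / ‖x‖ by ring]

theorem integral_mul_gradLogKernel_eq {B : EuclideanSpace ℝ ι → ℝ}
    (hint : Integrable B) (hzero : ∫ u, B u = 0) (i : ι) (x : EuclideanSpace ℝ ι)
    (hfin : ∫⁻ u, ‖B u‖ₑ * ‖gradLogKernel i (x - u) - gradLogKernel i x‖ₑ ≠ ∞) :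
    ∫ z, B (x - z) * gradLogKernel i z
      = ∫ u, B u * (gradLogKernel i (x - u) - gradLogKernel i x) := by
  have hK : Measurable fun u => gradLogKernel i (x - u) - gradLogKernel i x :=
    ((measurable_gradLogKernel i).comp (measurable_const.sub measurable_id)).sub_const _
  have hg : Integrable fun u => B u * (gradLogKernel i (x - u) - gradLogKernel i x) :=
    ⟨hint.1.mul hK.aestronglyMeasurable, by simpa [HasFiniteIntegral, enorm_mul] using hfin.lt_top⟩
  rw [← integral_sub_left_eq_self _ volume x]
  simp only [sub_sub_cancel]
  calc ∫ u, B u * gradLogKernel i (x - u)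
      = ∫ u, (B u * (gradLogKernel i (x - u) - gradLogKernel i x) + B u * gradLogKernel i x) := by
        congr 1; ext u; ring
    _ = _ := by
        rw [integral_add hg (hint.mul_const _), integral_mul_const, hzero, zero_mul, add_zero]

end GradLogKernel

theorem setLIntegral_closedBall_mul_norm_le {E : Type*} [NormedAddCommGroup E] [MeasurableSpace E]
    [OpensMeasurableSpace E] (μ : Measure E) (f : E → ℝ≥0∞) (a b : ℝ) :
    ∫⁻ u in closedBall 0 b, f u * ENNReal.ofReal ‖u‖ ∂μ
      ≤ ENNReal.ofReal a * (∫⁻ u, f u ∂μ)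
        + ENNReal.ofReal b * ∫⁻ u in (closedBall 0 a)ᶜ, f u ∂μ := by
  have hsplit : closedBall (0 : E) b ⊆ closedBall 0 a ∪ (closedBall 0 b \ closedBall 0 a) := by
    rw [union_sdiff_self]; exact subset_union_right
  refine (lintegral_mono_set hsplit).trans ((lintegral_union_le _ _ _).trans (add_le_add ?_ ?_))
  · calc ∫⁻ u in closedBall 0 a, f u * ENNReal.ofReal ‖u‖ ∂μ
        ≤ ∫⁻ u in closedBall 0 a, ENNReal.ofReal a * f u ∂μ := by
          refine setLIntegral_mono' measurableSet_closedBall fun u hu => ?_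
          rw [mul_comm]; gcongr; simpa using hu
      _ ≤ ENNReal.ofReal a * ∫⁻ u, f u ∂μ := by
          rw [lintegral_const_mul' _ _ ENNReal.ofReal_ne_top]
          gcongr; exact Measure.restrict_le_self
  · calc ∫⁻ u in closedBall 0 b \ closedBall 0 a, f u * ENNReal.ofReal ‖u‖ ∂μ
        ≤ ∫⁻ u in closedBall 0 b \ closedBall 0 a, ENNReal.ofReal b * f u ∂μ := by
          refine setLIntegral_mono' (measurableSet_closedBall.diff measurableSet_closedBall)
            fun u hu => ?_
          rw [mul_comm]; gcongr; simpa using hu.1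
      _ ≤ ENNReal.ofReal b * ∫⁻ u in (closedBall 0 a)ᶜ, f u ∂μ := by
          rw [lintegral_const_mul' _ _ ENNReal.ofReal_ne_top]
          gcongr; exact sdiff_subset_iff.2 (by simp)

theorem sqrt_div_sq_le_rpow_neg {r μ : ℝ} (hr : 1 ≤ r) (hμ : μ ≤ 1 / 2) :
    √r / r ^ 2 ≤ r ^ (-(1 + μ)) := by
  rw [sqrt_eq_rpow, ← rpow_two, ← rpow_sub (by linarith)]
  exact rpow_le_rpow_of_exponent_le hr (by linarith)

theorem sqrt_rpow_neg_div_le_rpow_neg {r δ μ : ℝ} (hr : 1 ≤ r) (hμ : μ ≤ δ / 2) :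
    √r ^ (-δ) / r ≤ r ^ (-(1 + μ)) := by
  rw [sqrt_eq_rpow, ← rpow_mul (by linarith), ← rpow_sub_one (by linarith)]
  exact rpow_le_rpow_of_exponent_le hr (by linarith)

local notation "ℝ²" => EuclideanSpace ℝ (Fin 2)

theorem lintegral_ofReal_comp_norm {f : ℝ → ℝ} (hf : ∀ y, 0 ≤ y → 0 ≤ f y)
    (hfi : IntegrableOn (fun y => y * f y) (Ioi 0)) :
    ∫⁻ u : ℝ², ENNReal.ofReal (f ‖u‖) = ENNReal.ofReal (2 * π * ∫ y in Ioi 0, y * f y) := by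
  have hint : Integrable (fun u : ℝ² => f ‖u‖) :=
    (integrable_fun_norm_addHaar volume).2 (by simpa using hfi)
  rw [← ofReal_integral_eq_lintegral_ofReal hint (ae_of_all _ fun u => hf _ (norm_nonneg u)),
    integral_fun_norm_addHaar]
  simp [measureReal_def, mul_assoc, ENNReal.ofReal_mul pi_nonneg]

theorem lintegral_ball_inv_norm_sub (x : ℝ²) {ρ : ℝ} (hρ : 0 ≤ ρ) :
    ∫⁻ u in ball x ρ, ENNReal.ofReal ‖x - u‖⁻¹ = ENNReal.ofReal (2 * π * ρ) := by
  set g : ℝ → ℝ := (Iio ρ).indicator fun y => y⁻¹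
  have hg : ∀ u, (ball x ρ).indicator (fun u => ENNReal.ofReal ‖x - u‖⁻¹) u
      = ENNReal.ofReal (g ‖x - u‖) := by
    intro u
    simp only [indicator, mem_ball, dist_comm, dist_eq_norm, mem_Iio, g]
    split_ifs <;> simp
  have hyg : EqOn (fun y => y * g y) ((Iio ρ).indicator 1) (Ioi 0) := by
    intro y (hy : 0 < y)
    simp only [g, indicator]
    split_ifs <;> simp [hy.ne']
  rw [← lintegral_indicator measurableSet_ball, funext hg,
    lintegral_sub_left_eq_self (fun v => ENNReal.ofReal (g ‖v‖)) x,
    lintegral_ofReal_comp_norm, setIntegral_congr_fun measurableSet_Ioi hyg]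
  · simp [integral_indicator measurableSet_Iio, Iio_inter_Ioi, hρ]
  · intro y hy; simp only [g, indicator]; split_ifs <;> positivity
  · exact (integrableOn_congr_fun hyg measurableSet_Ioi).2
      ((integrable_indicator_iff measurableSet_Iio).2
        (integrableOn_const (by simp [Iio_inter_Ioi])))

theorem lintegral_compl_closedBall_rpow_neg {s δ : ℝ} (hs : 0 < s) (hδ : 0 < δ) :
    ∫⁻ u in (closedBall (0 : ℝ²) s)ᶜ, ENNReal.ofReal (‖u‖ ^ (-(2 + δ)))
      = ENNReal.ofReal (2 * π / δ * s ^ (-δ)) := by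
  set g : ℝ → ℝ := (Ioi s).indicator fun y => y ^ (-(2 + δ))
  have hg : ∀ u : ℝ², (closedBall 0 s)ᶜ.indicator (fun u => ENNReal.ofReal (‖u‖ ^ (-(2 + δ)))) u
      = ENNReal.ofReal (g ‖u‖) := by
    intro u
    simp only [g, indicator, mem_compl_iff, mem_closedBall, dist_zero_right, not_le, mem_Ioi]
    split_ifs <;> simp
  have hyg : EqOn (fun y => y * g y) ((Ioi s).indicator fun y => y ^ (-(1 + δ))) (Ioi 0) := by
    intro y (hy : 0 < y)
    simp only [g, indicator]
    split_ifs
    · rw [show -(1 + δ) = 1 + -(2 + δ) by ring, rpow_add hy, rpow_one]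
    · simp
  have hIoi : (volume.restrict (Ioi (0 : ℝ))).restrict (Ioi s) = volume.restrict (Ioi s) := by
    rw [Measure.restrict_restrict measurableSet_Ioi, Ioi_inter_Ioi, sup_eq_left.2 hs.le]
  rw [← lintegral_indicator measurableSet_closedBall.compl, funext hg,
    lintegral_ofReal_comp_norm, setIntegral_congr_fun measurableSet_Ioi hyg]
  · rw [integral_indicator measurableSet_Ioi, hIoi, integral_Ioi_rpow_of_lt (by linarith) hs,
      show -(1 + δ) + 1 = -δ by ring]
    congr 1
    field_simp
  · intro y hy; simp only [g, indicator]; split_ifs <;> positivity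
  · rw [integrableOn_congr_fun hyg measurableSet_Ioi, IntegrableOn,
      integrable_indicator_iff measurableSet_Ioi, IntegrableOn, hIoi]
    exact integrableOn_Ioi_rpow_of_lt (by linarith) hs

section KernelIncrement

variable (f : ℝ² → ℝ≥0∞) (i : Fin 2) {x : ℝ²}

theorem setLIntegral_closedBall_mul_gradLogKernel_sub_le (hx : x ≠ 0) (a : ℝ) :
    ∫⁻ u in closedBall 0 (‖x‖ / 2), f u * ‖gradLogKernel i (x - u) - gradLogKernel i x‖ₑ
      ≤ ENNReal.ofReal (2 / ‖x‖ ^ 2) * (ENNReal.ofReal a * (∫⁻ u, f u)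
        + ENNReal.ofReal (‖x‖ / 2) * ∫⁻ u in (closedBall 0 a)ᶜ, f u) := by
  calc _ ≤ ∫⁻ u in closedBall 0 (‖x‖ / 2),
        ENNReal.ofReal (2 / ‖x‖ ^ 2) * (f u * ENNReal.ofReal ‖u‖) := by
        refine setLIntegral_mono' measurableSet_closedBall fun u hu => ?_
        rw [mul_left_comm, ← ENNReal.ofReal_mul (by positivity), enorm_eq_ofReal_abs]
        gcongr
        exact abs_gradLogKernel_sub_le_of_norm_le i hx (by simpa using hu)
    _ ≤ _ := by
        rw [lintegral_const_mul' _ _ ENNReal.ofReal_ne_top]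
        gcongr
        exact setLIntegral_closedBall_mul_norm_le volume f a (‖x‖ / 2)

theorem setLIntegral_compl_closedBall_mul_gradLogKernel_sub_le (hx : x ≠ 0) {m : ℝ≥0∞}
    (hm : ∀ u, ‖x‖ / 2 < ‖u‖ → f u ≤ m) :
    ∫⁻ u in (closedBall 0 (‖x‖ / 2))ᶜ, f u * ‖gradLogKernel i (x - u) - gradLogKernel i x‖ₑ
      ≤ m * ENNReal.ofReal (π * ‖x‖)
        + ENNReal.ofReal (3 / ‖x‖) * ∫⁻ u in (closedBall 0 (‖x‖ / 2))ᶜ, f u := by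
  set S := (closedBall (0 : ℝ²) (‖x‖ / 2))ᶜ
  set h : ℝ² → ℝ≥0∞ := (ball x (‖x‖ / 2)).indicator fun u => ENNReal.ofReal ‖x - u‖⁻¹
  have hh : Measurable h := Measurable.indicator (by fun_prop) measurableSet_ball
  calc _ ≤ ∫⁻ u in S, m * h u + ENNReal.ofReal (3 / ‖x‖) * f u := by
        refine setLIntegral_mono' measurableSet_closedBall.compl fun u hu => ?_
        have hK : ‖gradLogKernel i (x - u) - gradLogKernel i x‖ₑ
            ≤ h u + ENNReal.ofReal (3 / ‖x‖) := by
          rw [enorm_eq_ofReal_abs]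
          refine (ENNReal.ofReal_le_ofReal (abs_gradLogKernel_sub_le_indicator i hx u)).trans
            (ENNReal.ofReal_add_le.trans_eq ?_)
          simp only [h, indicator]; split_ifs <;> simp
        calc f u * ‖gradLogKernel i (x - u) - gradLogKernel i x‖ₑ
            ≤ f u * (h u + ENNReal.ofReal (3 / ‖x‖)) := by gcongr
          _ ≤ m * h u + ENNReal.ofReal (3 / ‖x‖) * f u := by
            rw [mul_add, mul_comm (f u) (ENNReal.ofReal _)]
            gcongr
            exact hm u (by simpa [S] using hu)
    _ = m * (∫⁻ u in S, h u) + ENNReal.ofReal (3 / ‖x‖) * ∫⁻ u in S, f u := by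
        rw [lintegral_add_left (hh.const_mul m), lintegral_const_mul _ hh,
          lintegral_const_mul' _ _ ENNReal.ofReal_ne_top]
    _ ≤ _ := by
        gcongr
        calc ∫⁻ u in S, h u ≤ ∫⁻ u, h u := setLIntegral_le_lintegral _ _
          _ = ENNReal.ofReal (π * ‖x‖) := by
            rw [lintegral_indicator measurableSet_ball,
              lintegral_ball_inv_norm_sub x (by positivity)]
            ring_nf

end KernelIncrement

section Decay

variable {B : ℝ² → ℝ} {C δ R₀ : ℝ}

theorem setLIntegral_compl_closedBall_enorm_le (hδ : 0 < δ)
    (hdecay : ∀ x, R₀ ≤ ‖x‖ → |B x| ≤ C * ‖x‖ ^ (-(2 + δ))) {s : ℝ} (hs : 0 < s) (hsR : R₀ ≤ s) :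
    ∫⁻ u in (closedBall 0 s)ᶜ, ‖B u‖ₑ ≤ ENNReal.ofReal (C * (2 * π / δ) * s ^ (-δ)) := by
  calc _ ≤ ∫⁻ u : ℝ² in (closedBall 0 s)ᶜ,
        ENNReal.ofReal C * ENNReal.ofReal (‖u‖ ^ (-(2 + δ))) := by
        refine setLIntegral_mono' measurableSet_closedBall.compl fun u hu => ?_
        rw [enorm_eq_ofReal_abs, ← ENNReal.ofReal_mul' (rpow_nonneg (norm_nonneg u) _)]
        have hsu : s < ‖u‖ := by simpa using hu
        exact ENNReal.ofReal_le_ofReal (hdecay u (hsR.trans hsu.le))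
    _ = _ := by
        rw [lintegral_const_mul' _ _ ENNReal.ofReal_ne_top,
          lintegral_compl_closedBall_rpow_neg hs hδ,
          ← ENNReal.ofReal_mul' (by positivity), mul_assoc]

theorem enorm_le_of_lt_norm (hC : 0 ≤ C) (hδ : 0 ≤ δ)
    (hdecay : ∀ x, R₀ ≤ ‖x‖ → |B x| ≤ C * ‖x‖ ^ (-(2 + δ))) {s t : ℝ} (ht : 0 < t) (htR : R₀ ≤ t)
    (hts : t ≤ s) {u : ℝ²} (hu : s < ‖u‖) :
    ‖B u‖ₑ ≤ ENNReal.ofReal (C / s ^ 2 * t ^ (-δ)) := by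
  have hu0 : 0 < ‖u‖ := by linarith
  have hpow : ‖u‖ ^ (-(2 + δ)) ≤ (s ^ 2)⁻¹ * t ^ (-δ) := by
    rw [show -(2 + δ) = -2 + -δ by ring, rpow_add hu0, rpow_neg hu0.le, rpow_two]
    exact mul_le_mul (inv_anti₀ (by nlinarith) (by gcongr; linarith))
      (rpow_le_rpow_of_nonpos ht (hts.trans hu.le) (by linarith)) (by positivity) (by positivity)
  rw [enorm_eq_ofReal_abs, div_eq_mul_inv, mul_assoc]
  exact ENNReal.ofReal_le_ofReal ((hdecay u (by linarith)).trans (by gcongr))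

theorem lintegral_enorm_mul_gradLogKernel_sub_le (hC : 0 ≤ C) (hδ : 0 < δ)
    (hdecay : ∀ x, R₀ ≤ ‖x‖ → |B x| ≤ C * ‖x‖ ^ (-(2 + δ))) (hint : Integrable B) (i : Fin 2)
    {x : ℝ²} (hx : max 4 (R₀ ^ 2) ≤ ‖x‖) :
    ∫⁻ u, ‖B u‖ₑ * ‖gradLogKernel i (x - u) - gradLogKernel i x‖ₑ
      ≤ ENNReal.ofReal
          ((2 * (∫ u, |B u|) + C * (8 * π / δ + 4 * π)) * ‖x‖ ^ (-(1 + min δ 1 / 2))) := by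
  set r := ‖x‖
  have hr : 4 ≤ r := le_of_max_le_left hx
  have hx0 : x ≠ 0 := norm_pos_iff.1 (by linarith)
  have ht : 2 ≤ √r := le_sqrt_of_sq_le (by linarith)
  have htr : √r ≤ r / 2 := by nlinarith [sq_sqrt (show 0 ≤ r by linarith)]
  have htR : R₀ ≤ √r := le_sqrt_of_sq_le (le_of_max_le_right hx)
  have hN : ∫⁻ u, ‖B u‖ₑ = ENNReal.ofReal (∫ u, |B u|) :=
    (ofReal_integral_norm_eq_lintegral_enorm hint).symm
  have hT := setLIntegral_compl_closedBall_enorm_le hδ hdecay (by linarith) htR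
  have hT' : ∫⁻ u in (closedBall 0 (r / 2))ᶜ, ‖B u‖ₑ
      ≤ ENNReal.ofReal (C * (2 * π / δ) * √r ^ (-δ)) :=
    (lintegral_mono_set (compl_subset_compl.2 (closedBall_subset_closedBall htr))).trans hT
  have hm := fun u => enorm_le_of_lt_norm (u := u) hC hδ.le hdecay (by linarith) htR htr
  have ha := sqrt_div_sq_le_rpow_neg (r := r) (μ := min δ 1 / 2) (by linarith)
    (by linarith [min_le_right δ 1])
  have hb := sqrt_rpow_neg_div_le_rpow_neg (r := r) (δ := δ) (μ := min δ 1 / 2) (by linarith)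
    (by linarith [min_le_left δ 1])
  rw [← lintegral_add_compl _ (measurableSet_closedBall (x := 0) (ε := r / 2))]
  calc _ ≤ ENNReal.ofReal (2 / r ^ 2) * (ENNReal.ofReal √r * ENNReal.ofReal (∫ u, |B u|)
          + ENNReal.ofReal (r / 2) * ENNReal.ofReal (C * (2 * π / δ) * √r ^ (-δ)))
        + (ENNReal.ofReal (C / (r / 2) ^ 2 * √r ^ (-δ)) * ENNReal.ofReal (π * r)
          + ENNReal.ofReal (3 / r) * ENNReal.ofReal (C * (2 * π / δ) * √r ^ (-δ))) := by
        gcongr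
        · exact (setLIntegral_closedBall_mul_gradLogKernel_sub_le _ i hx0 √r).trans
            (by rw [hN]; gcongr)
        · exact (setLIntegral_compl_closedBall_mul_gradLogKernel_sub_le _ i hx0 hm).trans
            (by gcongr)
    _ = ENNReal.ofReal (2 / r ^ 2 * (√r * (∫ u, |B u|) + r / 2 * (C * (2 * π / δ) * √r ^ (-δ)))
          + (C / (r / 2) ^ 2 * √r ^ (-δ) * (π * r) + 3 / r * (C * (2 * π / δ) * √r ^ (-δ)))) := by
        repeat first
          | rw [← ENNReal.ofReal_mul (by positivity)]
          | rw [← ENNReal.ofReal_add (by positivity) (by positivity)]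
    _ ≤ _ := by
        refine ENNReal.ofReal_le_ofReal ?_
        calc _ = 2 * (∫ u, |B u|) * (√r / r ^ 2)
              + C * (8 * π / δ + 4 * π) * (√r ^ (-δ) / r) := by
              field_simp; ring
          _ ≤ _ := by rw [add_mul]; gcongr

end Decay

theorem grad_potential_decay_general
    (B : EuclideanSpace ℝ (Fin 2) → ℝ) (C δ R₀ : ℝ)
    (hC : 0 < C) (hδ : 0 < δ)
    (hint : Integrable B volume)
    (hzero : ∫ y, B y = 0)
    (hdecay : ∀ x, R₀ ≤ ‖x‖ → |B x| ≤ C * ‖x‖ ^ (-(2 + δ))) :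
    ∃ μ > (0 : ℝ), ∃ C' > (0 : ℝ), ∃ R > (0 : ℝ), ∀ i : Fin 2,
      ∀ x : EuclideanSpace ℝ (Fin 2), R ≤ ‖x‖ →
        |(1 / (2 * π)) * ∫ z, B (x - z) * (z i / ‖z‖ ^ 2)|
          ≤ C' * ‖x‖ ^ (-(1 + μ)) := by
  refine ⟨min δ 1 / 2, by positivity, (2 * (∫ u, |B u|) + C * (8 * π / δ + 4 * π)) / (2 * π),
    div_pos (by positivity) (by positivity), max 4 (R₀ ^ 2), by positivity, fun i x hx => ?_⟩
  have hbound := lintegral_enorm_mul_gradLogKernel_sub_le hC.le hδ hdecay hint i hx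
  have hI := (enorm_integral_le_lintegral_enorm
    fun u => B u * (gradLogKernel i (x - u) - gradLogKernel i x)).trans
    (by simpa only [enorm_mul] using hbound)
  rw [enorm_eq_ofReal_abs, ENNReal.ofReal_le_ofReal_iff (by positivity)] at hI
  change |1 / (2 * π) * ∫ z, B (x - z) * gradLogKernel i z| ≤ _
  rw [integral_mul_gradLogKernel_eq hint hzero i x (hbound.trans_lt ENNReal.ofReal_lt_top).ne,
    abs_mul, abs_of_pos (by positivity), div_mul_eq_mul_div, one_mul, div_mul_eq_mul_div]
  gcongr

/-- For an integrable zero-flux field with powerlike decay of order `2+δ`, the gradient of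
the logarithmic potential decays as `O(|x|^{−1−μ})` for some `μ > 0`. -/
theorem grad_potential_decay
    (B : EuclideanSpace ℝ (Fin 2) → ℝ) (C δ R₀ : ℝ)
    (hC : 0 < C) (hδ : 0 < δ) (hR₀ : 0 < R₀)
    (hmeas : Measurable B)
    (hint : Integrable B volume)
    (hzero : ∫ y, B y = 0)
    (hdecay : ∀ x, R₀ ≤ ‖x‖ → |B x| ≤ C * ‖x‖ ^ (-(2 + δ))) :
    ∃ μ > (0 : ℝ), ∃ C' > (0 : ℝ), ∃ R > (0 : ℝ), ∀ i : Fin 2,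
      ∀ x : EuclideanSpace ℝ (Fin 2), R ≤ ‖x‖ →
        |(1 / (2 * π)) * ∫ z, B (x - z) * (z i / ‖z‖ ^ 2)|
          ≤ C' * ‖x‖ ^ (-(1 + μ)) :=
  grad_potential_decay_general B C δ R₀ hC hδ hint hzero hdecay
end

section
/- For x, z ∈ ℝ² with |x| ≥ 1, if |x − z| ≤ R and R/|x| is small enough, then |z₁/|z|² − (cos θ)/|x|| ≤ 5R/|x|², where θ is the polar angle of x. -/
open Real

lemma coord_abs_le_norm (v : EuclideanSpace ℝ (Fin 2)) (i : Fin 2) : |v i| ≤ ‖v‖ := by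
  have h : ‖v i‖ ^ 2 ≤ ∑ j, ‖v j‖ ^ 2 :=
    Finset.single_le_sum (f := fun j => ‖v j‖ ^ 2) (fun j _ => sq_nonneg _) (Finset.mem_univ i)
  rw [EuclideanSpace.norm_eq]
  calc |v i| = Real.sqrt (‖v i‖ ^ 2) := by
        rw [Real.sqrt_sq (norm_nonneg _), Real.norm_eq_abs]
    _ ≤ _ := Real.sqrt_le_sqrt h

/-- If `|x − z| ≤ R` with `R/|x|` small enough, then
`|z₁/|z|² − cos θ/|x|| ≤ 5R/|x|²`, where `θ` is the polar angle of `x`. -/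
theorem kernel_polar_estimate :
    ∃ c > (0 : ℝ), ∀ (x z : EuclideanSpace ℝ (Fin 2)) (R θ : ℝ),
      1 ≤ ‖x‖ → 0 < R → R / ‖x‖ ≤ c → ‖x - z‖ ≤ R →
      x 0 = ‖x‖ * Real.cos θ → x 1 = ‖x‖ * Real.sin θ →
      |z 0 / ‖z‖ ^ 2 - Real.cos θ / ‖x‖| ≤ 5 * R / ‖x‖ ^ 2 := by
  refine ⟨1/10, by norm_num, ?_⟩
  intro x z R θ hx hR hc hxz h0 h1
  have hr : (0:ℝ) < ‖x‖ := lt_of_lt_of_le one_pos hx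
  have hRr : R ≤ ‖x‖ / 10 := by
    rw [div_le_iff₀ hr] at hc; linarith
  have hsub : |‖x‖ - ‖z‖| ≤ R := le_trans (abs_norm_sub_norm_le x z) hxz
  rw [abs_le] at hsub
  obtain ⟨hsub1, hsub2⟩ := hsub
  have hs_lb : ‖x‖ - R ≤ ‖z‖ := by linarith
  have hs_ub : ‖z‖ ≤ ‖x‖ + R := by linarith
  have hs : (0:ℝ) < ‖z‖ := by linarith
  have hcos : Real.cos θ = x 0 / ‖x‖ := by
    rw [h0]; field_simp
  have hd : |z 0 - x 0| ≤ R := by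
    have h := coord_abs_le_norm (x - z) 0
    have hxz0 : (x - z) 0 = x 0 - z 0 := rfl
    rw [hxz0] at h
    rw [abs_sub_comm]
    exact le_trans h hxz
  have hx0 : |x 0| ≤ ‖x‖ := coord_abs_le_norm x 0
  have hbig : (0:ℝ) ≤ R * ((‖z‖ - 9/10 * ‖x‖) * (5 * ‖z‖ + 7/2 * ‖x‖)) :=
    mul_nonneg hR.le (mul_nonneg (by linarith) (by linarith))
  have hdiff : |‖x‖ ^ 2 - ‖z‖ ^ 2| ≤ R * (‖x‖ + ‖z‖) := by
    have e : ‖x‖ ^ 2 - ‖z‖ ^ 2 = (‖x‖ - ‖z‖) * (‖x‖ + ‖z‖) := by ring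
    rw [e, abs_mul, abs_of_nonneg (by linarith : (0:ℝ) ≤ ‖x‖ + ‖z‖)]
    exact mul_le_mul_of_nonneg_right (abs_le.mpr ⟨hsub1, hsub2⟩) (by linarith)
  have hN : |z 0 * ‖x‖ ^ 2 - ‖z‖ ^ 2 * x 0|
      ≤ R * ‖x‖ ^ 2 + ‖x‖ * (R * (‖x‖ + ‖z‖)) := by
    have e : z 0 * ‖x‖ ^ 2 - ‖z‖ ^ 2 * x 0
        = (z 0 - x 0) * ‖x‖ ^ 2 + x 0 * (‖x‖ ^ 2 - ‖z‖ ^ 2) := by ring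
    rw [e]
    refine le_trans (abs_add_le _ _) (add_le_add ?_ ?_)
    · rw [abs_mul, abs_of_nonneg (sq_nonneg ‖x‖)]
      exact mul_le_mul_of_nonneg_right hd (sq_nonneg _)
    · rw [abs_mul]
      exact mul_le_mul hx0 hdiff (abs_nonneg _) hr.le
  have key : |z 0 * ‖x‖ ^ 2 - ‖z‖ ^ 2 * x 0| ≤ 5 * R * ‖z‖ ^ 2 := by
    refine le_trans hN ?_
    nlinarith [hbig, mul_nonneg hR.le (sq_nonneg ‖x‖)]
  have hs2 : (0:ℝ) < ‖z‖ ^ 2 := by positivity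
  have hr2 : (0:ℝ) < ‖x‖ ^ 2 := by positivity
  rw [hcos, div_div, ← pow_two, div_sub_div _ _ (ne_of_gt hs2) (ne_of_gt hr2), abs_div,
    abs_of_pos (mul_pos hs2 hr2), div_le_div_iff₀ (mul_pos hs2 hr2) hr2]
  calc |z 0 * ‖x‖ ^ 2 - ‖z‖ ^ 2 * x 0| * ‖x‖ ^ 2 ≤ (5 * R * ‖z‖ ^ 2) * ‖x‖ ^ 2 :=
        mul_le_mul_of_nonneg_right key (le_of_lt hr2)
    _ = 5 * R * (‖z‖ ^ 2 * ‖x‖ ^ 2) := by ring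
end

section
/- Let φ : ℝ² → ℝ be continuous and satisfy |φ(x) − F ln|x|| < ε ln|x| for |x| > R, where F = N + η with η ∈ (0,1], N ∈ ℕ, and 0 < ε < η. Let χ_j(x) = e^{−φ(x)}(x₁+ix₂)^j. Then for any α ∈ ℂ^{N+1} with |α| = 1 and any ϱ > R: (1/ϱ²)∫_{ϱ ≤ |x| ≤ 2ϱ} |Σ_{j=0}^N α_j χ_j(x)|² dx ≤ (4π/(1+ε+N−F)) (2ϱ)^{2(N−F+ε)}, which tends to 0 as ϱ → ∞. -/
/-!
The factor `e^{-φ}` is at most `|x|^{ε-F}` on the annulus, so the integral is bounded by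
`∫ |z|^{2(ε-F)} |p(z)|²` with `p(z) = Σ α_j z^j`. Since the weight is radial, rotating by a
suitable angle shows that the monomials `z^j` are orthogonal on the annulus, whence this equals
`Σ |α_j|² ∫ |z|^{2(ε-F)+2j} ≤ ∫ |z|^{2(N-F+ε)}` (as `|z| ≥ 1` and `|α| = 1`). The last integral is
computed in polar coordinates; the exponent `2(N-F+ε) = -2(η-ε)` is negative, which gives the decay.
-/

open MeasureTheory Real Filter

open scoped ComplexConjugate

def annulus {E : Type*} [Norm E] (s t : ℝ) : Set E := {x | s ≤ ‖x‖ ∧ ‖x‖ ≤ t}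

section Annulus

variable {E : Type*} [NormedAddCommGroup E] {s t : ℝ}

theorem annulus_eq_preimage_Icc : (annulus s t : Set E) = norm ⁻¹' Set.Icc s t := rfl

theorem isClosed_annulus : IsClosed (annulus s t : Set E) :=
  isClosed_Icc.preimage continuous_norm

theorem measurableSet_annulus [MeasurableSpace E] [OpensMeasurableSpace E] :
    MeasurableSet (annulus s t : Set E) :=
  isClosed_annulus.measurableSet

theorem isCompact_annulus [ProperSpace E] : IsCompact (annulus s t : Set E) :=
  Metric.isCompact_of_isClosed_isBounded isClosed_annulus <|
    (Metric.isBounded_closedBall (x := 0) (r := t)).subset fun x hx => by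
      simpa using hx.2

theorem LinearIsometryEquiv.preimage_annulus {F : Type*} [NormedAddCommGroup F]
    [NormedSpace ℝ E] [NormedSpace ℝ F] (f : E ≃ₗᵢ[ℝ] F) :
    f ⁻¹' annulus s t = annulus s t := by
  ext x
  simp [annulus]

end Annulus

theorem LinearIsometryEquiv.setIntegral_annulus_comp
    {E F G : Type*} [NormedAddCommGroup E] [InnerProductSpace ℝ E] [FiniteDimensional ℝ E]
    [MeasurableSpace E] [BorelSpace E] [NormedAddCommGroup F] [InnerProductSpace ℝ F]
    [FiniteDimensional ℝ F] [MeasurableSpace F] [BorelSpace F]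
    [NormedAddCommGroup G] [NormedSpace ℝ G] (f : E ≃ₗᵢ[ℝ] F) (g : F → G) (s t : ℝ) :
    ∫ x in annulus s t, g (f x) = ∫ y in annulus s t, g y := by
  rw [← f.preimage_annulus]
  exact f.measurePreserving.setIntegral_preimage_emb
    f.toHomeomorph.measurableEmbedding g _

theorem exists_circle_pow_mul_conj_pow_eq_neg_one {j k : ℕ} (hjk : j ≠ k) :
    ∃ u : Circle, (u : ℂ) ^ j * conj (u : ℂ) ^ k = -1 := by
  have hjk' : (j : ℂ) - k ≠ 0 := sub_ne_zero.2 (by exact_mod_cast hjk)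
  refine ⟨Circle.exp (π / (j - k)), ?_⟩
  rw [Circle.coe_exp, ← Complex.exp_conj, ← Complex.exp_nat_mul, ← Complex.exp_nat_mul,
    ← Complex.exp_add, ← Complex.exp_pi_mul_I]
  congr 1
  simp only [map_mul, Complex.conj_ofReal, Complex.conj_I]
  push_cast
  field_simp
  ring

theorem setIntegral_annulus_radial_mul_pow_mul_conj_pow_eq_zero (w : ℝ → ℂ) {j k : ℕ}
    (hjk : j ≠ k) (s t : ℝ) :
    ∫ z in annulus s t, w ‖z‖ * (z ^ j * conj z ^ k) = 0 := by
  obtain ⟨u, hu⟩ := exists_circle_pow_mul_conj_pow_eq_neg_one hjk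
  have hrot := (rotation u).setIntegral_annulus_comp
    (fun z => w ‖z‖ * (z ^ j * conj z ^ k)) s t
  have hneg : ∀ z : ℂ, w ‖rotation u z‖ * ((rotation u z) ^ j * conj (rotation u z) ^ k)
      = -(w ‖z‖ * (z ^ j * conj z ^ k)) := fun z => by
    rw [LinearIsometryEquiv.norm_map]
    simp only [rotation_apply, map_mul, mul_pow]
    linear_combination (w ‖z‖ * (z ^ j * conj z ^ k)) * hu
  simp only [hneg, integral_neg] at hrot
  linear_combination -hrot / 2

theorem integrableOn_annulus_radial_mul_pow_mul_conj_pow {w : ℝ → ℂ} {s t : ℝ}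
    (hw : ContinuousOn w (Set.Icc s t)) (j k : ℕ) :
    IntegrableOn (fun z : ℂ => w ‖z‖ * (z ^ j * conj z ^ k)) (annulus s t) := by
  refine ContinuousOn.integrableOn_compact isCompact_annulus ?_
  exact (hw.comp continuous_norm.continuousOn fun _ hz => hz).mul (by fun_prop)

theorem setIntegral_annulus_radial_mul_norm_sum_sq {ι : Type*} [Fintype ι] {w : ℝ → ℝ}
    {s t : ℝ} (hw : ContinuousOn w (Set.Icc s t)) (α : ι → ℂ) {e : ι → ℕ}
    (he : Function.Injective e) :
    ∫ z in (annulus s t : Set ℂ), w ‖z‖ * ‖∑ j, α j * z ^ e j‖ ^ 2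
      = ∑ j, ‖α j‖ ^ 2 * ∫ z in (annulus s t : Set ℂ), w ‖z‖ * ‖z‖ ^ (2 * e j) := by
  set W : ℝ → ℂ := fun r => (w r : ℂ)
  have hW : ContinuousOn W (Set.Icc s t) := Complex.continuous_ofReal.comp_continuousOn hw
  have hexpand : ∀ z : ℂ, ((w ‖z‖ * ‖∑ j, α j * z ^ e j‖ ^ 2 : ℝ) : ℂ)
      = ∑ j, ∑ k, α j * conj (α k) * (W ‖z‖ * (z ^ e j * conj z ^ e k)) := fun z => by
    rw [Complex.ofReal_mul, Complex.ofReal_pow, ← Complex.mul_conj', map_sum, Finset.sum_mul_sum,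
      Finset.mul_sum]
    refine Finset.sum_congr rfl fun j _ => ?_
    rw [Finset.mul_sum]
    refine Finset.sum_congr rfl fun k _ => ?_
    simp only [W, map_mul, map_pow]
    ring
  have hdiag : ∀ (z : ℂ) (n : ℕ), W ‖z‖ * (z ^ n * conj z ^ n)
      = ((w ‖z‖ * ‖z‖ ^ (2 * n) : ℝ) : ℂ) := fun z n => by
    rw [← mul_pow, Complex.mul_conj', pow_mul]
    push_cast
    ring
  apply Complex.ofReal_injective
  calc ((∫ z in annulus s t, w ‖z‖ * ‖∑ j, α j * z ^ e j‖ ^ 2 : ℝ) : ℂ)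
      = ∑ j, ∑ k, α j * conj (α k) *
          ∫ z in annulus s t, W ‖z‖ * (z ^ e j * conj z ^ e k) := by
        rw [← integral_complex_ofReal]
        simp_rw [hexpand]
        rw [integral_finsetSum _ fun j _ => integrable_finsetSum _ fun k _ =>
          (integrableOn_annulus_radial_mul_pow_mul_conj_pow hW _ _).const_mul _]
        refine Finset.sum_congr rfl fun j _ => ?_
        rw [integral_finsetSum _ fun k _ =>
          (integrableOn_annulus_radial_mul_pow_mul_conj_pow hW _ _).const_mul _]
        exact Finset.sum_congr rfl fun k _ => integral_const_mul _ _
    _ = ∑ j, α j * conj (α j) * ∫ z in annulus s t, W ‖z‖ * (z ^ e j * conj z ^ e j) := by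
        refine Finset.sum_congr rfl fun j _ => Finset.sum_eq_single j (fun k _ hkj => ?_) (by simp)
        rw [setIntegral_annulus_radial_mul_pow_mul_conj_pow_eq_zero W (he.ne hkj.symm), mul_zero]
    _ = _ := by
        simp only [hdiag, integral_complex_ofReal, Complex.mul_conj']
        push_cast
        rfl

theorem setIntegral_annulus_radial_mul_norm_sum_sq_le {ι : Type*} [Fintype ι] {w : ℝ → ℝ}
    {s t : ℝ} (hs : 1 ≤ s) (hw : ContinuousOn w (Set.Icc s t))
    (hw₀ : ∀ r ∈ Set.Icc s t, 0 ≤ w r) (α : ι → ℂ) {e : ι → ℕ} (he : Function.Injective e)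
    {n : ℕ} (hen : ∀ j, e j ≤ n) :
    ∫ z in (annulus s t : Set ℂ), w ‖z‖ * ‖∑ j, α j * z ^ e j‖ ^ 2
      ≤ (∑ j, ‖α j‖ ^ 2) * ∫ z in (annulus s t : Set ℂ), w ‖z‖ * ‖z‖ ^ (2 * n) := by
  have hint : ∀ m : ℕ, IntegrableOn (fun z : ℂ => w ‖z‖ * ‖z‖ ^ m) (annulus s t) := fun m =>
    ((hw.comp continuous_norm.continuousOn fun _ hz => hz).mul
      (by fun_prop)).integrableOn_compact isCompact_annulus
  rw [setIntegral_annulus_radial_mul_norm_sum_sq hw α he, Finset.sum_mul]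
  refine Finset.sum_le_sum fun j _ => mul_le_mul_of_nonneg_left ?_ (by positivity)
  refine setIntegral_mono_on (hint _) (hint _) measurableSet_annulus fun z hz => ?_
  have hz₁ : 1 ≤ ‖z‖ := hs.trans hz.1
  exact mul_le_mul_of_nonneg_left (pow_le_pow_right₀ hz₁ (by have := hen j; lia)) (hw₀ _ hz)

theorem setIntegral_annulus_fun_norm (f : ℝ → ℝ) {s t : ℝ} (hs : 0 < s) (hst : s ≤ t) :
    ∫ z in (annulus s t : Set ℂ), f ‖z‖ = 2 * π * ∫ r in s..t, r * f r := by
  have hball : volume.real (Metric.ball (0 : ℂ) 1) = π := by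
    simp [measureReal_def, Complex.volume_ball]
  have hind : (annulus s t : Set ℂ).indicator (fun z => f ‖z‖)
      = fun z => (Set.Icc s t).indicator f ‖z‖ := by
    rw [annulus_eq_preimage_Icc]
    exact funext fun _ => Set.indicator_comp_right (g := f) _
  have hsub : Set.Icc s t ⊆ Set.Ioi 0 := fun _ hr => hs.trans_le hr.1
  rw [← integral_indicator measurableSet_annulus, hind, integral_fun_norm_addHaar volume,
    Complex.finrank_real_complex, hball, intervalIntegral.integral_of_le hst,
    ← integral_Icc_eq_integral_Ioc]
  have hmul : (fun r => r * (Set.Icc s t).indicator f r)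
      = (Set.Icc s t).indicator fun r => r * f r :=
    funext fun _ => (Set.indicator_mul_right _ (fun r => r) f).symm
  simp only [smul_eq_mul, Nat.add_one_sub_one, pow_one, nsmul_eq_mul]
  rw [hmul, integral_indicator measurableSet_Icc, Measure.restrict_restrict measurableSet_Icc,
    Set.inter_eq_self_of_subset_left hsub]
  push_cast
  ring

theorem one_div_sq_mul_setIntegral_annulus_rpow_mul_pow_le {c s : ℝ} (n : ℕ)
    (hcn : -1 < c + n) (hs : 0 < s) :
    1 / s ^ 2 * ∫ z in (annulus s (2 * s) : Set ℂ), ‖z‖ ^ (2 * c) * ‖z‖ ^ (2 * n)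
      ≤ 4 * π / (1 + c + n) * (2 * s) ^ (2 * (c + n)) := by
  have hs₂ : s ≤ 2 * s := by linarith
  have hpow : ∀ r ∈ Set.uIcc s (2 * s),
      r * (r ^ (2 * c) * r ^ (2 * n)) = r ^ (2 * (c + n) + 1) := fun r hr => by
    rw [Set.uIcc_of_le hs₂] at hr
    have hr₀ : 0 < r := hs.trans_le hr.1
    rw [Real.rpow_add_one hr₀.ne', ← Real.rpow_natCast, ← Real.rpow_add hr₀]
    push_cast
    ring_nf
  rw [setIntegral_annulus_fun_norm (fun r => r ^ (2 * c) * r ^ (2 * n)) hs hs₂,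
    intervalIntegral.integral_congr hpow, integral_rpow (Or.inl (by linarith)),
    Real.rpow_add_one (by positivity), Real.rpow_add_one (by positivity)]
  have hden : 0 < 2 * (c + n) + 1 + 1 := by linarith
  have hrest : 0 ≤ 2 * π * s ^ (2 * (c + n) + 1 + 1) / (s ^ 2 * (2 * (c + n) + 1 + 1)) := by
    positivity
  have hsplit : 1 / s ^ 2 * (2 * π * (((2 * s) ^ (2 * (c + n)) * (2 * s) * (2 * s)
      - s ^ (2 * (c + n) + 1 + 1)) / (2 * (c + n) + 1 + 1)))
      = 4 * π / (1 + c + n) * (2 * s) ^ (2 * (c + n))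
        - 2 * π * s ^ (2 * (c + n) + 1 + 1) / (s ^ 2 * (2 * (c + n) + 1 + 1)) := by
    have : 1 + c + n ≠ 0 := by linarith
    field_simp
    ring
  linarith

theorem exp_neg_le_rpow_of_abs_sub_mul_log_lt {a F ε r : ℝ} (hr : 0 < r)
    (h : |a - F * log r| < ε * log r) : exp (-a) ≤ r ^ (ε - F) := by
  rw [Real.rpow_def_of_pos hr, exp_le_exp]
  linarith [(abs_lt.1 h).1]

theorem setIntegral_annulus_norm_sum_exp_neg_mul_sq_le {ι : Type*} [Fintype ι] (α : ι → ℂ)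
    (e : ι → ℕ) {φ : EuclideanSpace ℝ (Fin 2) → ℝ} {c s t : ℝ} (hs : 0 < s)
    (hφ : ∀ x ∈ annulus s t, exp (-φ x) ≤ ‖x‖ ^ c) :
    ∫ x in annulus s t, ‖∑ j, α j * (Complex.exp (-(φ x : ℂ)) *
        ((x 0 : ℂ) + (x 1 : ℂ) * Complex.I) ^ e j)‖ ^ 2
      ≤ ∫ z in (annulus s t : Set ℂ), ‖z‖ ^ (2 * c) * ‖∑ j, α j * z ^ e j‖ ^ 2 := by
  set T := Complex.orthonormalBasisOneI.repr.symm
  have hT : ∀ x, T x = (x 0 : ℂ) + (x 1 : ℂ) * Complex.I :=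
    Complex.orthonormalBasisOneI_repr_symm_apply
  rw [← T.setIntegral_annulus_comp (fun z => ‖z‖ ^ (2 * c) * ‖∑ j, α j * z ^ e j‖ ^ 2)]
  have hint : IntegrableOn (fun x => ‖T x‖ ^ (2 * c) * ‖∑ j, α j * T x ^ e j‖ ^ 2)
      (annulus s t) := by
    refine ContinuousOn.integrableOn_compact isCompact_annulus ?_
    refine ContinuousOn.mul ?_ (by fun_prop)
    refine (continuous_norm.comp T.continuous).continuousOn.rpow_const fun x hx => ?_
    exact Or.inl (by simpa using (hs.trans_le hx.1).ne')
  refine integral_mono_of_nonneg (.of_forall fun _ => by positivity) hint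
    (ae_restrict_of_forall_mem measurableSet_annulus fun x hx => ?_)
  have hfactor : ∑ j, α j * (Complex.exp (-(φ x : ℂ)) * T x ^ e j)
      = Complex.exp (-(φ x : ℂ)) * ∑ j, α j * T x ^ e j := by
    rw [Finset.mul_sum]
    exact Finset.sum_congr rfl fun j _ => by ring
  have hsq : exp (-φ x) ^ 2 ≤ ‖x‖ ^ (2 * c) := by
    rw [mul_comm, Real.rpow_mul (norm_nonneg x)]
    exact_mod_cast pow_le_pow_left₀ (exp_nonneg _) (hφ x hx) 2
  simp only [← hT, hfactor, norm_mul, mul_pow, Complex.norm_exp, T.norm_map]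
  gcongr
  simpa using hsq

theorem ac_tail_estimate_general
    (φ : EuclideanSpace ℝ (Fin 2) → ℝ)
    (N : ℕ) (η ε R F : ℝ)
    (hη : η ∈ Set.Ioc (0 : ℝ) 1) (hε : 0 < ε) (hεη : ε < η) (hR : 1 < R)
    (hF : F = N + η)
    (hasymp : ∀ x : EuclideanSpace ℝ (Fin 2), R < ‖x‖ →
      |φ x - F * Real.log ‖x‖| < ε * Real.log ‖x‖)
    (α : Fin (N + 1) → ℂ) (hα : ∑ j, ‖α j‖ ^ 2 = 1)
    (ϱ : ℝ) (hϱ : R < ϱ) :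
    (1 / ϱ ^ 2) *
        (∫ x in {x : EuclideanSpace ℝ (Fin 2) | ϱ ≤ ‖x‖ ∧ ‖x‖ ≤ 2 * ϱ},
          ‖∑ j, α j * (Complex.exp (-(φ x : ℂ)) *
            ((x 0 : ℂ) + (x 1 : ℂ) * Complex.I) ^ (j : ℕ))‖ ^ 2)
      ≤ (4 * π / (1 + ε + N - F)) * (2 * ϱ) ^ (2 * (N - F + ε)) ∧
    Tendsto (fun ϱ : ℝ => (4 * π / (1 + ε + N - F)) * (2 * ϱ) ^ (2 * (N - F + ε)))
      atTop (nhds 0) := by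
  have hϱ₀ : 0 < ϱ := by linarith
  have hexponent : -1 < ε - F + N := by rw [hF]; linarith [hη.2]
  have hdecay : 2 * ((N : ℝ) - F + ε) = -(2 * (η - ε)) := by rw [hF]; ring
  refine ⟨?_, ?_⟩
  · have hφ : ∀ x ∈ annulus ϱ (2 * ϱ), exp (-φ x) ≤ ‖x‖ ^ (ε - F) := fun x hx =>
      exp_neg_le_rpow_of_abs_sub_mul_log_lt (hϱ₀.trans_le hx.1) (hasymp x (hϱ.trans_le hx.1))
    have hw : ContinuousOn (fun r : ℝ => r ^ (2 * (ε - F))) (Set.Icc ϱ (2 * ϱ)) :=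
      continuousOn_id.rpow_const fun r hr => Or.inl (hϱ₀.trans_le hr.1).ne'
    calc _ ≤ 1 / ϱ ^ 2 * ∫ z in (annulus ϱ (2 * ϱ) : Set ℂ),
            ‖z‖ ^ (2 * (ε - F)) * ‖z‖ ^ (2 * N) := by
          refine mul_le_mul_of_nonneg_left ?_ (by positivity)
          refine (setIntegral_annulus_norm_sum_exp_neg_mul_sq_le α Fin.val hϱ₀ hφ).trans ?_
          simpa [hα] using setIntegral_annulus_radial_mul_norm_sum_sq_le (hR.trans hϱ).le hw
            (fun r hr => rpow_nonneg (hϱ₀.le.trans hr.1) _) α Fin.val_injective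
            Fin.is_le
      _ ≤ _ := by
          convert one_div_sq_mul_setIntegral_annulus_rpow_mul_pow_le N hexponent hϱ₀
            using 3 <;> ring
  · simp only [hdecay]
    simpa using ((tendsto_rpow_neg_atTop (by linarith)).comp
      (tendsto_id.const_mul_atTop two_pos)).const_mul (4 * π / (1 + ε + N - F))

/-- Tail estimate for normalized linear combinations of Aharonov–Casher zero modes:
`(1/ϱ²)∫_{ϱ≤|x|≤2ϱ} |Σ α_j χ_j|² ≤ (4π/(1+ε+N−F))(2ϱ)^{2(N−F+ε)}`, which tends to `0`
as `ϱ → ∞`. -/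
theorem ac_tail_estimate
    (φ : EuclideanSpace ℝ (Fin 2) → ℝ) (hφ : Continuous φ)
    (N : ℕ) (η ε R F : ℝ)
    (hη : η ∈ Set.Ioc (0 : ℝ) 1) (hε : 0 < ε) (hεη : ε < η) (hR : 1 < R)
    (hF : F = N + η)
    (hasymp : ∀ x : EuclideanSpace ℝ (Fin 2), R < ‖x‖ →
      |φ x - F * Real.log ‖x‖| < ε * Real.log ‖x‖)
    (α : Fin (N + 1) → ℂ) (hα : ∑ j, ‖α j‖ ^ 2 = 1)
    (ϱ : ℝ) (hϱ : R < ϱ) :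
    (1 / ϱ ^ 2) *
        (∫ x in {x : EuclideanSpace ℝ (Fin 2) | ϱ ≤ ‖x‖ ∧ ‖x‖ ≤ 2 * ϱ},
          ‖∑ j, α j * (Complex.exp (-(φ x : ℂ)) *
            ((x 0 : ℂ) + (x 1 : ℂ) * Complex.I) ^ (j : ℕ))‖ ^ 2)
      ≤ (4 * π / (1 + ε + N - F)) * (2 * ϱ) ^ (2 * (N - F + ε)) ∧
    Tendsto (fun ϱ : ℝ => (4 * π / (1 + ε + N - F)) * (2 * ϱ) ^ (2 * (N - F + ε)))
      atTop (nhds 0) :=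
  ac_tail_estimate_general φ N η ε R F hη hε hεη hR hF hasymp α hα ϱ hϱ
end
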